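/- The node reliability polynomial of any tree on $n \geq 4$ vertices has at least one inflection point in the open interval $(0,1)$; that is, the second derivative of $\mathrm{nRel}(T;p)$ changes sign on $(0,1)$. -/

import Mathlib

/-!
Write `P = nRel T` and `n = |V|`, so `P 0 = 0` and `P 1 = 1`. Near `0` the curve is concave: the
`p²`-coefficient of `P` is `c₂ - (n - 1) c₁ = c₂ - n (n - 1) < 0`, as `c₂ ≤ n (n - 1) / 2`. At `1`
the slope is `n cₙ - cₙ₋₁ ≥ 1`, since deleting a vertex of degree `≥ 2` disconnects a tree, so
`cₙ₋₁ ≤ n - 1`. If `P` were concave on all of `[0, 1]`, it would lie above its chord `p` and below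
its tangent at `1`, which lies below that chord; so `P = p`, contradicting `P''(0) < 0`.
-/

open Finset
open scoped Classical

/-- The node reliability polynomial of a graph `G`: the probability that the set of
operational nodes is nonempty and induces a connected subgraph, when each node
operates independently with probability `p`. -/
noncomputable def nRel {V : Type*} [Fintype V] (G : SimpleGraph V) (p : ℝ) : ℝ :=
  ∑ s : Finset V, if (G.induce (s : Set V)).Connected
    then p ^ s.card * (1 - p) ^ (Fintype.card V - s.card) else 0

/-- `cCount G k` is the number of `k`-element vertex subsets of `G` inducing a
connected subgraph (note: `SimpleGraph.Connected` requires nonemptiness). -/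
noncomputable def cCount {V : Type*} [Fintype V] (G : SimpleGraph V) (k : ℕ) : ℕ :=
  ((Finset.univ : Finset (Finset V)).filter
    (fun s : Finset V => s.card = k ∧ (G.induce (s : Set V)).Connected)).card

open Polynomial Filter

lemma Polynomial.iteratedDeriv_eval (P : ℝ[X]) (k : ℕ) :
    iteratedDeriv k (fun x => P.eval x) = fun x => (derivative^[k] P).eval x := by
  induction k with
  | zero => rfl
  | succ k ih =>
    ext x
    rw [iteratedDeriv_succ, ih, Polynomial.deriv, Function.iterate_succ_apply']

lemma Polynomial.eval_zero_derivative_derivative {R : Type*} [CommSemiring R] (P : R[X]) :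
    (derivative (derivative P)).eval 0 = 2 * P.coeff 2 := by
  rw [← coeff_zero_eq_eval_zero, coeff_derivative, coeff_derivative]
  norm_num [mul_comm]

lemma Polynomial.coeff_one_one_sub_X_pow {R : Type*} [CommRing R] (m : ℕ) :
    ((1 - X : R[X]) ^ m).coeff 1 = -m := by
  have := coeff_derivative ((1 - X : R[X]) ^ m) 0
  simpa [coeff_zero_eq_eval_zero, derivative_pow] using this.symm

lemma Polynomial.eval_one_derivative_X_pow_mul_one_sub_X_pow {R : Type*} [CommRing R]
    (k m : ℕ) :
    (derivative (X ^ k * (1 - X) ^ m : R[X])).eval 1 = k * 0 ^ m - m * 0 ^ (m - 1) := by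
  simp only [derivative_mul, derivative_pow, map_natCast, derivative_X, mul_one, derivative_sub,
    derivative_one, zero_sub, mul_neg, eval_add, eval_mul, eval_natCast, eval_pow, eval_X, one_pow,
    eval_sub, eval_one, sub_self, eval_neg, one_mul]
  ring

lemma ContinuousAt.exists_mem_Ioo_zero_one_neg {f : ℝ → ℝ} (hf : ContinuousAt f 0)
    (h0 : f 0 < 0) : ∃ a ∈ Set.Ioo (0 : ℝ) 1, f a < 0 :=
  (Eventually.and (Ioo_mem_nhdsGT one_pos)
    (eventually_nhdsWithin_of_eventually_nhds (hf.eventually_lt continuousAt_const h0))).exists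

lemma Polynomial.eq_zero_of_derivative_derivative_nonpos {g : ℝ[X]} (h0 : g.eval 0 = 0)
    (h1 : g.eval 1 = 0) (hd1 : 0 ≤ (derivative g).eval 1)
    (hconc : ∀ x ∈ Set.Ioo (0 : ℝ) 1, (derivative (derivative g)).eval x ≤ 0) : g = 0 := by
  have hanti : AntitoneOn (fun x => (derivative g).eval x) (Set.Icc 0 1) :=
    antitoneOn_of_deriv_nonpos (convex_Icc 0 1) (derivative g).continuousOn
      (derivative g).differentiableOn (by simpa only [interior_Icc, Polynomial.deriv])
  have hmono : MonotoneOn (fun x => g.eval x) (Set.Icc 0 1) :=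
    monotoneOn_of_deriv_nonneg (convex_Icc 0 1) g.continuousOn g.differentiableOn fun x hx => by
      rw [interior_Icc] at hx
      rw [Polynomial.deriv]
      exact hd1.trans (hanti (Set.Ioo_subset_Icc_self hx) (Set.right_mem_Icc.2 zero_le_one) hx.2.le)
  refine eq_zero_of_infinite_isRoot g ((Set.Icc_infinite zero_lt_one).mono fun x hx => ?_)
  have := hmono (Set.left_mem_Icc.2 zero_le_one) hx hx.1
  have := hmono hx (Set.right_mem_Icc.2 zero_le_one) hx.2
  simp only [Set.mem_ofPred_eq, IsRoot.def]
  linarith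

lemma Polynomial.exists_sign_change_derivative_derivative {P : ℝ[X]} (h0 : P.eval 0 = 0)
    (h1 : P.eval 1 = 1) (hd1 : 1 ≤ (derivative P).eval 1)
    (hdd0 : (derivative (derivative P)).eval 0 < 0) :
    ∃ a ∈ Set.Ioo (0 : ℝ) 1, ∃ b ∈ Set.Ioo (0 : ℝ) 1,
      (derivative (derivative P)).eval a < 0 ∧ 0 < (derivative (derivative P)).eval b := by
  obtain ⟨a, ha, hPa⟩ :=
    (derivative (derivative P)).continuous.continuousAt.exists_mem_Ioo_zero_one_neg hdd0
  obtain ⟨b, hb, hPb⟩ : ∃ b ∈ Set.Ioo (0 : ℝ) 1, 0 < (derivative (derivative P)).eval b := by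
    by_contra! hconc
    have hPX : P - X = 0 := eq_zero_of_derivative_derivative_nonpos (by simp [h0])
      (by simp [h1]) (by simpa using hd1) (by simpa using hconc)
    rw [sub_eq_zero.1 hPX] at hPa
    simp at hPa
  exact ⟨a, ha, b, hb, hPa, hPb⟩

lemma SimpleGraph.IsAcyclic.not_connected_induce_compl_singleton {W : Type*} {G : SimpleGraph W}
    (hG : G.IsAcyclic) {v x y : W} (hx : G.Adj v x) (hy : G.Adj v y) (hxy : x ≠ y) :
    ¬ (G.induce {v}ᶜ).Connected := by
  intro hc
  obtain ⟨w⟩ := hc.preconnected ⟨x, hx.ne'⟩ ⟨y, hy.ne'⟩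
  let q : G.Path x y := (w.map (Embedding.induce {v}ᶜ).toHom).toPath
  have hvq : v ∉ (q : G.Walk x y).support := fun hv => by
    obtain ⟨⟨u, hu⟩, -, huv⟩ := List.mem_map.1 <|
      (Walk.support_map _ w) ▸ Walk.support_toPath_subset_support _ hv
    exact hu huv
  have := hG.mem_support_of_ne_mem_support_of_adj_of_isPath (Walk.IsPath.mk' (by simp [hx.ne']) :
    (hx.symm.toWalk).IsPath) q.2 hy hvq
  simp [hxy.symm, hy.ne'] at this

section

variable {V : Type*} [Fintype V]

lemma cCount_le_choose (G : SimpleGraph V) (k : ℕ) :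
    cCount G k ≤ (Fintype.card V).choose k := by
  rw [cCount, ← card_univ, ← card_powersetCard]
  exact card_le_card fun s hs => mem_powersetCard_univ.2 (mem_filter.1 hs).2.1

lemma cCount_one (G : SimpleGraph V) : cCount G 1 = Fintype.card V := by
  refine ((cCount_le_choose G 1).trans_eq (Nat.choose_one_right _)).antisymm ?_
  refine card_le_card_of_injOn (fun v => {v}) (fun v _ => ?_) singleton_injective.injOn
  simp only [coe_filter, Set.mem_ofPred_eq, card_singleton, true_and, mem_univ]
  rw [coe_singleton]
  have : Nonempty ({v} : Set V) := ⟨⟨v, rfl⟩⟩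
  exact SimpleGraph.Connected.of_subsingleton

lemma SimpleGraph.Connected.cCount_card {G : SimpleGraph V} (hG : G.Connected) :
    cCount G (Fintype.card V) = 1 := by
  rw [cCount, card_eq_one]
  refine ⟨univ, ?_⟩
  ext s
  simp only [mem_filter, mem_univ, true_and, mem_singleton, card_eq_iff_eq_univ]
  refine ⟨And.left, ?_⟩
  rintro rfl
  refine ⟨rfl, ?_⟩
  rw [coe_univ]
  exact G.induceUnivIso.connected_iff.2 hG

lemma SimpleGraph.IsTree.exists_two_le_degree {G : SimpleGraph V} (hG : G.IsTree)
    (h3 : 3 ≤ Fintype.card V) : ∃ v, 2 ≤ G.degree v := by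
  by_contra! h
  have hsum := G.sum_degrees_eq_twice_card_edges
  have hpairs := hG.card_edgeFinset
  have : ∑ v, G.degree v ≤ Fintype.card V := by
    simpa using sum_le_sum fun v (_ : v ∈ univ) => Nat.le_of_lt_succ (h v)
  omega

lemma SimpleGraph.IsTree.cCount_card_sub_one_le {G : SimpleGraph V} (hG : G.IsTree)
    (h3 : 3 ≤ Fintype.card V) : cCount G (Fintype.card V - 1) ≤ Fintype.card V - 1 := by
  obtain ⟨v, hv⟩ := hG.exists_two_le_degree h3
  rw [← card_neighborFinset_eq_degree] at hv
  obtain ⟨x, hx, y, hy, hxy⟩ := one_lt_card.1 hv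
  rw [mem_neighborFinset] at hx hy
  have hdisc : ¬ (G.induce ((univ.erase v : Finset V) : Set V)).Connected := by
    rw [coe_erase, coe_univ, ← Set.compl_eq_univ_sdiff]
    exact hG.isAcyclic.not_connected_induce_compl_singleton hx hy hxy
  have hsub : univ.filter (fun s : Finset V =>
        s.card = Fintype.card V - 1 ∧ (G.induce (s : Set V)).Connected)
      ⊆ (powersetCard (Fintype.card V - 1) univ).erase (univ.erase v) := by
    intro s hs
    rw [mem_filter] at hs
    exact mem_erase.2 ⟨fun h => hdisc (h ▸ hs.2.2), mem_powersetCard_univ.2 hs.2.1⟩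
  have hmem : univ.erase v ∈ powersetCard (Fintype.card V - 1) univ := by
    simp [card_erase_of_mem]
  have := card_le_card hsub
  rwa [← cCount, card_erase_of_mem hmem, card_powersetCard, card_univ,
    Nat.choose_symm (by omega), Nat.choose_one_right] at this

lemma sum_connected_eq_sum_cCount {M : Type*} [AddCommMonoid M] (G : SimpleGraph V)
    (f : ℕ → M) :
    (∑ s : Finset V, if (G.induce (s : Set V)).Connected then f s.card else 0)
      = ∑ k ∈ Icc 1 (Fintype.card V), cCount G k • f k := by
  rw [← sum_filter, ← sum_fiberwise_of_maps_to' (g := card) (t := Icc 1 (Fintype.card V))]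
  · refine sum_congr rfl fun k _ => ?_
    rw [sum_const, filter_filter, cCount]
    simp_rw [and_comm]
  · intro s hs
    obtain ⟨⟨x, hx⟩⟩ := (mem_filter.1 hs).2.nonempty
    exact mem_Icc.2 ⟨card_pos.2 ⟨x, hx⟩, card_le_univ s⟩

lemma nRel_eq_sum_cCount (G : SimpleGraph V) (p : ℝ) :
    nRel G p = ∑ k ∈ Icc 1 (Fintype.card V),
      (cCount G k : ℝ) * (p ^ k * (1 - p) ^ (Fintype.card V - k)) := by
  simp only [nRel, sum_connected_eq_sum_cCount G fun k => p ^ k * (1 - p) ^ (Fintype.card V - k),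
    nsmul_eq_mul]

noncomputable def nRelPoly (G : SimpleGraph V) : ℝ[X] :=
  ∑ k ∈ Icc 1 (Fintype.card V), C (cCount G k : ℝ) * (X ^ k * (1 - X) ^ (Fintype.card V - k))

lemma nRel_eq_eval_nRelPoly (G : SimpleGraph V) : nRel G = fun p => (nRelPoly G).eval p := by
  ext p
  simp [nRel_eq_sum_cCount, nRelPoly, eval_finsetSum]

lemma eval_zero_nRelPoly (G : SimpleGraph V) : (nRelPoly G).eval 0 = 0 := by
  refine (eval_finsetSum _ _ _).trans (sum_eq_zero fun k hk => ?_)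
  simp [Nat.one_le_iff_ne_zero.1 (mem_Icc.1 hk).1]

lemma SimpleGraph.Connected.eval_one_nRelPoly {G : SimpleGraph V} (hG : G.Connected) :
    (nRelPoly G).eval 1 = 1 := by
  rw [nRelPoly, eval_finsetSum, sum_eq_single_of_mem (Fintype.card V)
    (mem_Icc.2 ⟨Fintype.card_pos_iff.2 hG.nonempty, le_rfl⟩)]
  · simp [hG.cCount_card]
  · intro k hk hne
    simp [Nat.sub_ne_zero_of_lt (lt_of_le_of_ne (mem_Icc.1 hk).2 hne)]

lemma coeff_nRelPoly_two (G : SimpleGraph V) (h2 : 2 ≤ Fintype.card V) :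
    (nRelPoly G).coeff 2 = cCount G 2 - ((Fintype.card V : ℝ) - 1) * cCount G 1 := by
  rw [nRelPoly, finsetSum_coeff, sum_eq_add_of_mem 1 2 (mem_Icc.2 ⟨le_rfl, by omega⟩)
    (mem_Icc.2 ⟨one_le_two, h2⟩) (by norm_num)]
  · simp only [coeff_C_mul, coeff_X_pow_mul', le_refl, one_le_two, if_true, Nat.sub_self,
      Nat.add_one_sub_one, coeff_one_one_sub_X_pow, coeff_zero_eq_eval_zero]
    push_cast [Nat.cast_sub (one_le_two.trans h2)]
    simp only [neg_sub, eval_pow, eval_sub, eval_one, eval_X, sub_zero, one_pow, mul_one]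
    ring
  · intro k hk ⟨hk1, hk2⟩
    rw [coeff_C_mul, coeff_X_pow_mul', if_neg, mul_zero]
    have := (mem_Icc.1 hk).1
    omega

lemma eval_one_derivative_nRelPoly (G : SimpleGraph V) (h2 : 2 ≤ Fintype.card V) :
    (derivative (nRelPoly G)).eval 1
      = Fintype.card V * cCount G (Fintype.card V) - cCount G (Fintype.card V - 1) := by
  rw [nRelPoly, derivative_sum, eval_finsetSum, sum_eq_add_of_mem (Fintype.card V)
    (Fintype.card V - 1) (mem_Icc.2 ⟨by omega, le_rfl⟩) (mem_Icc.2 ⟨by omega, by omega⟩)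
    (by omega)]
  · simp only [derivative_C_mul, eval_mul, eval_C, eval_one_derivative_X_pow_mul_one_sub_X_pow,
      Nat.sub_self, Nat.sub_sub_self (one_le_two.trans h2)]
    push_cast [Nat.cast_sub (one_le_two.trans h2)]
    ring
  · intro k hk ⟨hk1, hk2⟩
    rw [derivative_C_mul, eval_mul, eval_one_derivative_X_pow_mul_one_sub_X_pow]
    obtain ⟨j, hj⟩ : ∃ j, Fintype.card V - k = j + 2 := ⟨Fintype.card V - k - 2, by grind⟩
    simp [hj]

end

theorem stmt12 {V : Type*} [Fintype V] (T : SimpleGraph V)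
    (hT : T.Connected) (hac : T.IsAcyclic)
    (n : ℕ) (hn : n = Fintype.card V) (hn4 : 4 ≤ n) :
    ∃ a ∈ Set.Ioo (0:ℝ) 1, ∃ b ∈ Set.Ioo (0:ℝ) 1,
      iteratedDeriv 2 (nRel T) a < 0 ∧ 0 < iteratedDeriv 2 (nRel T) b := by
  subst hn
  rw [nRel_eq_eval_nRelPoly, iteratedDeriv_eval]
  refine exists_sign_change_derivative_derivative (eval_zero_nRelPoly T) hT.eval_one_nRelPoly
    ?_ ?_
  · have hleaves : (cCount T (Fintype.card V - 1) : ℝ) ≤ Fintype.card V - 1 := by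
      rw [← Nat.cast_pred (by omega)]
      exact_mod_cast (SimpleGraph.IsTree.mk hT hac).cCount_card_sub_one_le (by omega)
    rw [eval_one_derivative_nRelPoly T (by omega), hT.cCount_card]
    push_cast
    linarith
  · have hpairs : (cCount T 2 : ℝ) ≤ Fintype.card V * (Fintype.card V - 1) / 2 := by
      rw [← Nat.cast_choose_two]
      exact_mod_cast cCount_le_choose T 2
    have hn4' : (4 : ℝ) ≤ Fintype.card V := by exact_mod_cast hn4
    rw [eval_zero_derivative_derivative, coeff_nRelPoly_two T (by omega), cCount_one]
    nlinarith
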